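/- arXiv:2402.11615 — 3 statements merged into one kernel-verified Lean document; each statement's English description precedes it below -/
import Mathlib

section
/- Let (X_n)_{n≥1} be a sequence of real random variables, each with law N(0,1) (the variables are not assumed independent). Then almost surely lim_{n→∞} |X_n|^{1/|α(n)|_*} = 1. -/
open MeasureTheory Filter
open scoped ENNReal NNReal Topology ProbabilityTheory

noncomputable section

/-- For `n ≥ 1` with prime factorization `n = p₁^{α₁} ⋯ p_k^{α_k}` (`p_j` the `j`-th prime),
`alphaStar n = 1·α₁ + 2·α₂ + ⋯ + k·α_k`; here `p.primeCounting` is the index of the prime `p`. -/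
def alphaStar (n : ℕ) : ℕ := n.factorization.sum fun p k => p.primeCounting * k

/-! Write `a n = alphaStar n`. Since the standard Gaussian density is at most `1`, and by
Chebyshev's inequality, `ℙ(|X n| ∉ [exp (-ε a n), exp (ε a n)]) ≤ 3 exp (-ε a n)`. The function
`a` is completely additive with `a p_j = j`, so Euler's product gives
`∑ₙ y ^ a n = ∏ⱼ (1 - y ^ j)⁻¹ < ∞` for `0 ≤ y < 1`. Borel–Cantelli (which needs no independence)
then shows that almost surely `|log |X n|| ≤ ε a n` eventually, for each `ε = 1 / (k + 1)`. -/

open ProbabilityTheory Real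

lemma alphaStar_mul {m n : ℕ} (hm : m ≠ 0) (hn : n ≠ 0) :
    alphaStar (m * n) = alphaStar m + alphaStar n := by
  rw [alphaStar, Nat.factorization_mul hm hn,
    Finsupp.sum_add_index' (fun _ => mul_zero _) fun _ => mul_add _]
  rfl

lemma Nat.Prime.alphaStar {p : ℕ} (hp : p.Prime) : alphaStar p = p.primeCounting := by
  rw [_root_.alphaStar, hp.factorization, Finsupp.sum_single_index (mul_zero _), mul_one]

lemma Nat.Prime.primeCounting_ne_zero {p : ℕ} (hp : p.Prime) : p.primeCounting ≠ 0 :=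
  Nat.primeCounting_eq_zero_iff.not.2 hp.one_lt.not_ge

lemma Nat.primeCounting_injOn_primes : Set.InjOn Nat.primeCounting {p | p.Prime} :=
  fun p (hp : p.Prime) q (hq : q.Prime) hpq => Nat.count_injective hp hq <| by
    simpa [Nat.primeCounting, Nat.primeCounting', Nat.count_succ, hp, hq] using hpq

/-- `n ↦ y ^ alphaStar n`, redefined to be `0` at `n = 0` so that it is multiplicative. -/
def alphaStarPowHom (y : ℝ) : ℕ →* ℝ where
  toFun n := if n = 0 then 0 else y ^ alphaStar n
  map_one' := by simp [alphaStar]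
  map_mul' m n := by
    rcases eq_or_ne m 0 with rfl | hm
    · simp
    rcases eq_or_ne n 0 with rfl | hn
    · simp
    simp [hm, hn, alphaStar_mul hm hn, pow_add]

lemma alphaStarPowHom_zero (y : ℝ) : alphaStarPowHom y 0 = 0 := by simp [alphaStarPowHom]

lemma alphaStarPowHom_apply_of_ne_zero (y : ℝ) {n : ℕ} (hn : n ≠ 0) :
    alphaStarPowHom y n = y ^ alphaStar n := if_neg hn

lemma alphaStarPowHom_nonneg {y : ℝ} (hy : 0 ≤ y) (n : ℕ) : 0 ≤ alphaStarPowHom y n := by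
  rcases eq_or_ne n 0 with rfl | hn
  · rw [alphaStarPowHom_zero]
  · rw [alphaStarPowHom_apply_of_ne_zero y hn]; positivity

lemma inv_one_sub_le_exp {t y : ℝ} (ht : 0 ≤ t) (hty : t ≤ y) (hy : y < 1) :
    (1 - t)⁻¹ ≤ rexp (t / (1 - y)) := by
  have h1t : 0 < 1 - t := by linarith
  calc (1 - t)⁻¹ = 1 + t / (1 - t) := by field_simp; ring
    _ ≤ 1 + t / (1 - y) := by gcongr
    _ ≤ rexp (t / (1 - y)) := by linarith [Real.add_one_le_exp (t / (1 - y))]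

lemma prod_inv_one_sub_le_exp_sum {ι : Type*} (s : Finset ι) {t : ι → ℝ} {y : ℝ}
    (ht : ∀ i ∈ s, 0 ≤ t i) (hty : ∀ i ∈ s, t i ≤ y) (hy : y < 1) :
    ∏ i ∈ s, (1 - t i)⁻¹ ≤ rexp ((∑ i ∈ s, t i) / (1 - y)) := by
  rw [Finset.sum_div, Real.exp_sum]
  exact Finset.prod_le_prod (fun i hi => inv_nonneg.2 (by linarith [hty i hi]))
    fun i hi => inv_one_sub_le_exp (ht i hi) (hty i hi) hy

lemma sum_primesBelow_pow_primeCounting_le {y : ℝ} (h0 : 0 ≤ y) (h1 : y < 1) (N : ℕ) :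
    ∑ p ∈ N.primesBelow, y ^ p.primeCounting ≤ (1 - y)⁻¹ := by
  rw [← Finset.sum_image fun p hp q hq => Nat.primeCounting_injOn_primes
      (Nat.prime_of_mem_primesBelow hp) (Nat.prime_of_mem_primesBelow hq),
    ← tsum_geometric_of_lt_one h0 h1]
  exact (summable_geometric_of_lt_one h0 h1).sum_le_tsum _ fun _ _ => pow_nonneg h0 _

lemma prod_primesBelow_inv_one_sub_pow_primeCounting_le {y : ℝ} (h0 : 0 ≤ y) (h1 : y < 1)
    (N : ℕ) :
    ∏ p ∈ N.primesBelow, (1 - y ^ p.primeCounting)⁻¹ ≤ rexp ((1 - y)⁻¹ / (1 - y)) :=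
  (prod_inv_one_sub_le_exp_sum _ (fun _ _ => pow_nonneg h0 _)
    (fun p hp => pow_le_of_le_one h0 h1.le
      (Nat.prime_of_mem_primesBelow hp).primeCounting_ne_zero) h1).trans <| by
    gcongr; exact sum_primesBelow_pow_primeCounting_le h0 h1 N

/-- Euler's product for the partition generating function: `∑ₙ y ^ alphaStar n = ∏ⱼ (1 - yʲ)⁻¹`. -/
lemma summable_pow_alphaStar {y : ℝ} (h0 : 0 ≤ y) (h1 : y < 1) :
    Summable fun n => y ^ alphaStar n := by
  set f := alphaStarPowHom y
  have hf_prime {p : ℕ} (hp : p.Prime) : f p = y ^ p.primeCounting := by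
    rw [alphaStarPowHom_apply_of_ne_zero y hp.ne_zero, hp.alphaStar]
  have hf_lt_one {p : ℕ} (hp : p.Prime) : ‖f p‖ < 1 := by
    rw [hf_prime hp, Real.norm_of_nonneg (pow_nonneg h0 _)]
    exact pow_lt_one₀ h0 h1 hp.primeCounting_ne_zero
  have hf : Summable fun n => f n := by
    refine summable_of_sum_le (c := rexp ((1 - y)⁻¹ / (1 - y)))
      (alphaStarPowHom_nonneg h0) fun u => ?_
    set N := u.sup id + 1
    have hsmooth := EulerProduct.summable_and_hasSum_smoothNumbers_prod_primesBelow_geometric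
      hf_lt_one N
    calc ∑ n ∈ u, f n = ∑ n ∈ u with n ∈ N.smoothNumbers, f n := by
          refine (Finset.sum_filter_of_ne fun n hn hfn => Nat.mem_smoothNumbers_of_lt ?_ ?_).symm
          · exact Nat.pos_of_ne_zero fun h => hfn (h ▸ alphaStarPowHom_zero y)
          · exact Nat.lt_succ_of_le (Finset.le_sup (f := id) hn)
      _ = ∑ n ∈ u.subtype (· ∈ N.smoothNumbers), f n :=
          (Finset.sum_subtype_eq_sum_filter _).symm
      _ ≤ ∑' n : N.smoothNumbers, f n :=
          hsmooth.1.of_norm.sum_le_tsum _ fun n _ => alphaStarPowHom_nonneg h0 n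
      _ = ∏ p ∈ N.primesBelow, (1 - y ^ p.primeCounting)⁻¹ := by
          rw [hsmooth.2.tsum_eq]
          exact Finset.prod_congr rfl fun p hp => by
            rw [hf_prime (Nat.prime_of_mem_primesBelow hp)]
      _ ≤ _ := prod_primesBelow_inv_one_sub_pow_primeCounting_le h0 h1 N
  refine (summable_nat_add_iff 1).1 <| ((summable_nat_add_iff 1).2 hf).congr fun n => ?_
  exact alphaStarPowHom_apply_of_ne_zero y n.succ_ne_zero

lemma gaussianPDFReal_le_one (μ x : ℝ) : gaussianPDFReal μ 1 x ≤ 1 := by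
  have hsqrt : 1 ≤ √(2 * π * (1 : ℝ≥0)) := by
    rw [NNReal.coe_one, mul_one, Real.one_le_sqrt]; linarith [Real.pi_gt_three]
  have hexp : rexp (-(x - μ) ^ 2 / (2 * (1 : ℝ≥0))) ≤ 1 :=
    Real.exp_le_one_iff.2 <| div_nonpos_of_nonpos_of_nonneg (neg_nonpos.2 (sq_nonneg _)) (by simp)
  rw [gaussianPDFReal]
  exact mul_le_one₀ (inv_le_one_of_one_le₀ hsqrt) (exp_nonneg _) hexp

lemma gaussianReal_le_volume (μ : ℝ) (s : Set ℝ) : gaussianReal μ 1 s ≤ volume s := by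
  rw [gaussianReal_apply μ one_ne_zero, ← setLIntegral_one]
  exact lintegral_mono fun x => ENNReal.ofReal_le_one.2 (gaussianPDFReal_le_one μ x)

lemma gaussianReal_setOf_abs_lt_le (δ : ℝ) :
    gaussianReal 0 1 {x | |x| < δ} ≤ ENNReal.ofReal (2 * δ) := by
  have hball : {x : ℝ | |x| < δ} = Set.Ioo (-δ) δ := by ext x; exact abs_lt (a := x)
  calc gaussianReal 0 1 {x | |x| < δ} ≤ volume (Set.Ioo (-δ) δ) :=
        hball ▸ gaussianReal_le_volume 0 _
    _ = ENNReal.ofReal (2 * δ) := by rw [Real.volume_Ioo]; ring_nf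

lemma gaussianReal_setOf_le_abs_le {c : ℝ} (hc : 0 < c) :
    gaussianReal 0 1 {x | c ≤ |x|} ≤ ENNReal.ofReal (c ^ 2)⁻¹ := by
  simpa [variance_id_gaussianReal, integral_id_gaussianReal] using
    meas_ge_le_variance_div_sq (memLp_id_gaussianReal (μ := 0) (v := 1) 2) hc

lemma gaussianReal_abs_notMem_Icc_exp_le {s : ℝ} (hs : 0 ≤ s) :
    gaussianReal 0 1 {x | |x| ∉ Set.Icc (rexp (-s)) (rexp s)} ≤
      ENNReal.ofReal (3 * rexp (-s)) := by
  have hsub : {x : ℝ | |x| ∉ Set.Icc (rexp (-s)) (rexp s)} ⊆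
      {x | |x| < rexp (-s)} ∪ {x | rexp s ≤ |x|} := fun x hx => by
    simp only [Set.mem_Icc, not_and_or, not_le] at hx
    exact hx.imp id le_of_lt
  have hupper : (rexp s ^ 2)⁻¹ ≤ rexp (-s) := by
    rw [← Real.exp_nat_mul, ← Real.exp_neg, Real.exp_le_exp]; push_cast; linarith
  calc _ ≤ gaussianReal 0 1 {x | |x| < rexp (-s)} + gaussianReal 0 1 {x | rexp s ≤ |x|} :=
        (measure_mono hsub).trans (measure_union_le _ _)
    _ ≤ ENNReal.ofReal (2 * rexp (-s)) + ENNReal.ofReal (rexp (-s)) :=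
        add_le_add (gaussianReal_setOf_abs_lt_le _)
          ((gaussianReal_setOf_le_abs_le (exp_pos s)).trans (ENNReal.ofReal_le_ofReal hupper))
    _ = ENNReal.ofReal (3 * rexp (-s)) := by
        rw [← ENNReal.ofReal_add (by positivity) (by positivity)]; ring_nf

lemma ae_eventually_abs_mem_Icc_exp {Ω : Type*} [MeasurableSpace Ω] {P : Measure Ω}
    {X : ℕ → Ω → ℝ} (hXm : ∀ n, Measurable (X n)) (hX : ∀ n, P.map (X n) = gaussianReal 0 1)
    {s : ℕ → ℝ} (hs : ∀ n, 0 ≤ s n) (hsum : Summable fun n => rexp (-s n)) :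
    ∀ᵐ ω ∂P, ∀ᶠ n in atTop, |X n ω| ∈ Set.Icc (rexp (-s n)) (rexp (s n)) := by
  set B : ℕ → Set ℝ := fun n => {x | |x| ∉ Set.Icc (rexp (-s n)) (rexp (s n))}
  have hB : ∀ n, P (X n ⁻¹' B n) ≤ ENNReal.ofReal (3 * rexp (-s n)) := fun n => by
    have hBm : MeasurableSet (B n) := (measurable_abs measurableSet_Icc).compl
    rw [← Measure.map_apply (hXm n) hBm, hX n]
    exact gaussianReal_abs_notMem_Icc_exp_le (hs n)
  have hfin : ∑' n, P (X n ⁻¹' B n) ≠ ∞ := by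
    refine ne_top_of_le_ne_top ?_ (ENNReal.tsum_le_tsum hB)
    rw [← ENNReal.ofReal_tsum_of_nonneg (fun n => by positivity) (hsum.mul_left 3)]
    exact ENNReal.ofReal_ne_top
  filter_upwards [ae_eventually_notMem hfin] with ω hω
  exact hω.mono fun n hn => not_not.1 hn

lemma tendsto_rpow_inv_of_eventually_mem_Icc {ι : Type*} {l : Filter ι} {x a : ι → ℝ}
    (ha : ∀ i, 0 ≤ a i)
    (h : ∀ k : ℕ, ∀ᶠ i in l, x i ∈ Set.Icc (rexp (-(a i / (k + 1)))) (rexp (a i / (k + 1)))) :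
    Tendsto (fun i => x i ^ (a i)⁻¹) l (𝓝 1) := by
  have hpos : ∀ᶠ i in l, 0 < x i := (h 0).mono fun i hi => (exp_pos _).trans_le hi.1
  have hlog : Tendsto (fun i => log (x i) * (a i)⁻¹) l (𝓝 0) := by
    refine Metric.tendsto_nhds.2 fun ζ hζ => ?_
    obtain ⟨k, hk⟩ := exists_nat_one_div_lt hζ
    filter_upwards [h k] with i ⟨hlo, hhi⟩
    have hx : 0 < x i := (exp_pos _).trans_le hlo
    have hbound : |log (x i)| ≤ a i / (k + 1) :=
      abs_le.2 ⟨(le_log_iff_exp_le hx).2 hlo, (log_le_iff_le_exp hx).2 hhi⟩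
    rw [dist_zero_right, norm_mul, norm_inv, Real.norm_eq_abs, Real.norm_of_nonneg (ha i)]
    refine lt_of_le_of_lt ?_ hk
    rcases (ha i).eq_or_lt with hzero | hapos
    · rw [← hzero, inv_zero, mul_zero]; positivity
    · calc |log (x i)| * (a i)⁻¹ ≤ a i / (k + 1) * (a i)⁻¹ := by gcongr
        _ = 1 / (k + 1) := by field_simp
  have hexp := (continuous_exp.tendsto 0).comp hlog
  rw [Function.comp_def, exp_zero] at hexp
  exact hexp.congr' <| hpos.mono fun i hx => (rpow_def_of_pos hx _).symm

theorem stmt5_general {Ω : Type*} [MeasureSpace Ω]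
    (X : ℕ → Ω → ℝ) (hXm : ∀ n, Measurable (X n))
    (hX : ∀ n, Measure.map (X n) ℙ = ProbabilityTheory.gaussianReal 0 1) :
    ∀ᵐ ω ∂ℙ, Filter.Tendsto
      (fun n : ℕ => |X (n + 1) ω| ^ ((alphaStar (n + 1) : ℝ))⁻¹) Filter.atTop (𝓝 1) := by
  have hbounds (k : ℕ) : ∀ᵐ ω ∂ℙ, ∀ᶠ n in atTop, |X (n + 1) ω| ∈
      Set.Icc (rexp (-(alphaStar (n + 1) / (k + 1)))) (rexp (alphaStar (n + 1) / (k + 1))) := by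
    have hy : rexp (-1 / (k + 1)) < 1 :=
      exp_lt_one_iff.2 (div_neg_of_neg_of_pos (by norm_num) (by positivity))
    refine ae_eventually_abs_mem_Icc_exp (fun n => hXm (n + 1)) (fun n => hX (n + 1))
      (fun n => by positivity) ?_
    refine ((summable_nat_add_iff 1).2 (summable_pow_alphaStar (exp_pos _).le hy)).congr fun n => ?_
    rw [← exp_nat_mul]
    ring_nf
  filter_upwards [ae_all_iff.2 hbounds] with ω hω
  exact tendsto_rpow_inv_of_eventually_mem_Icc (fun n => Nat.cast_nonneg _) hω

theorem stmt5 {Ω : Type*} [MeasureSpace Ω] [IsProbabilityMeasure (ℙ : Measure Ω)]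
    (X : ℕ → Ω → ℝ) (hXm : ∀ n, Measurable (X n))
    (hX : ∀ n, Measure.map (X n) ℙ = ProbabilityTheory.gaussianReal 0 1) :
    ∀ᵐ ω ∂ℙ, Filter.Tendsto
      (fun n : ℕ => |X (n + 1) ω| ^ ((alphaStar (n + 1) : ℝ))⁻¹) Filter.atTop (𝓝 1) :=
  stmt5_general X hXm hX
end
end

section
/- Let (X_n)_{n≥1} be a centered Gaussian process with Var(X_n) = σ_n² for each n. Assume that for every a : ℕ → ℂ with ∑_{n=1}^∞ |a_n|² < ∞, almost surely ∑_{n=1}^∞ |a_n| |X_n| r₀^{|α(n)|_*} < ∞ for every 0 < r₀ < 1. Then for every 0 < r < 1, ∑_{n=1}^∞ σ_n² r^{2|α(n)|_*} < ∞. -/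
open MeasureTheory Filter
open scoped ENNReal NNReal Topology ProbabilityTheory

noncomputable section

/-- A centered Gaussian process: every finite real linear combination of the `X n`
has a centered Gaussian distribution `N(0, σ²)` (point mass at `0` when σ² = 0). -/
def IsCenteredGaussianProcess {Ω : Type*} [MeasureSpace Ω] (X : ℕ → Ω → ℝ) : Prop :=
  (∀ n, Measurable (X n)) ∧
  ∀ (S : Finset ℕ) (c : ℕ → ℝ), ∃ v : ℝ≥0,
    Measure.map (fun ω => ∑ n ∈ S, c n * X n ω) ℙ = ProbabilityTheory.gaussianReal 0 v

/-!
Suppose `∑ σₙ² r^{2|α(n)|}` diverges and put `tₙ = σₙ r^{|α(n)|}`. By the Abel–Dini theorem the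
weights `bₙ = tₙ / (1 + t₁² + ⋯ + tₙ²)` are square summable while `∑ bₙ tₙ = ∞`. For `aₙ = bₙ` the
partial sums `S_N = ∑_{n ≤ N} bₙ |Xₙ| r^{|α(n)|}` have mean `κ A_N`, where `κ = 𝔼|N(0,1)|` and
`A_N = ∑_{n ≤ N} bₙ tₙ → ∞`, and by Minkowski second moment at most `A_N²`. Paley–Zygmund then
gives `ℙ(S_N > κ A_N / 2) ≥ κ² / 4` for every `N`, which is incompatible with the almost sure
convergence of the series: almost surely convergent series of nonnegative terms have tight partial
sums.
-/

open ProbabilityTheory Finset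

section SecondMoment

variable {α : Type*} [MeasurableSpace α] {μ : Measure α}

lemma integral_mul_le_sqrt_mul_sqrt_of_nonneg {f g : α → ℝ} (hf0 : 0 ≤ᵐ[μ] f)
    (hg0 : 0 ≤ᵐ[μ] g) (hf : MemLp f 2 μ) (hg : MemLp g 2 μ) :
    ∫ x, f x * g x ∂μ ≤ √(∫ x, f x ^ 2 ∂μ) * √(∫ x, g x ^ 2 ∂μ) := by
  have h := integral_mul_le_Lp_mul_Lq_of_nonneg (p := 2) (q := 2) .two_two hf0 hg0
    (by simpa using hf) (by simpa using hg)
  simpa only [Real.rpow_two, ← Real.sqrt_eq_rpow] using h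

lemma integral_sq_sum_le_sq_sum_sqrt {ι : Type*} (s : Finset ι) {f : ι → α → ℝ}
    (hf0 : ∀ i, 0 ≤ f i) (hf : ∀ i, MemLp (f i) 2 μ) :
    ∫ x, (∑ i ∈ s, f i x) ^ 2 ∂μ ≤ (∑ i ∈ s, √(∫ x, f i x ^ 2 ∂μ)) ^ 2 := by
  have hint : ∀ i j, Integrable (fun x => f i x * f j x) μ := fun i j =>
    (hf j).integrable_mul (hf i) |>.congr (.of_forall fun x => mul_comm _ _)
  simp_rw [sq (∑ i ∈ s, _), sum_mul_sum]
  rw [integral_finsetSum _ fun i _ => integrable_finsetSum _ fun j _ => hint i j]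
  refine sum_le_sum fun i _ => ?_
  rw [integral_finsetSum _ fun j _ => hint i j]
  exact sum_le_sum fun j _ => integral_mul_le_sqrt_mul_sqrt_of_nonneg
    (.of_forall (hf0 i)) (.of_forall (hf0 j)) (hf i) (hf j)

lemma paley_zygmund [IsProbabilityMeasure μ] {S : α → ℝ} (hS0 : 0 ≤ S) (hS : MemLp S 2 μ)
    {θ : ℝ} (hθ0 : 0 ≤ θ) (hθ1 : θ ≤ 1) :
    ((1 - θ) * ∫ x, S x ∂μ) ^ 2 ≤ (∫ x, S x ^ 2 ∂μ) * μ.real {x | θ * ∫ x, S x ∂μ < S x} := by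
  set m := ∫ x, S x ∂μ
  have hm : 0 ≤ m := integral_nonneg hS0
  -- a measurable hull of the event is enough, since only its measure enters
  set E := toMeasurable μ {x | θ * m < S x}
  have hE : MeasurableSet E := measurableSet_toMeasurable _ _
  set g := E.indicator fun _ => (1 : ℝ)
  have hg0 : 0 ≤ g := Set.indicator_nonneg fun _ _ => zero_le_one
  have hg : MemLp g 2 μ := memLp_indicator_const 2 hE 1 (.inr (measure_ne_top _ _))
  have hg2 : ∫ x, g x ^ 2 ∂μ = μ.real {x | θ * m < S x} := by
    have : (fun x => g x ^ 2) = g := funext fun x => by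
      by_cases hx : x ∈ E <;> simp [g, hx]
    rw [this, integral_indicator_const _ hE, smul_eq_mul, mul_one, measureReal_def,
      measureReal_def, measure_toMeasurable]
  have hsplit : ∀ x, S x ≤ θ * m + S x * g x := fun x => by
    by_cases hx : θ * m < S x
    · have : g x = 1 := Set.indicator_of_mem (subset_toMeasurable μ _ hx) _
      nlinarith [mul_nonneg hθ0 hm]
    · nlinarith [mul_nonneg (hS0 x) (hg0 x)]
  have hmain : (1 - θ) * m ≤ √(∫ x, S x ^ 2 ∂μ) * √(μ.real {x | θ * m < S x}) := by
    have hint : Integrable (fun x => S x * g x) μ := hS.integrable_mul hg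
    have := integral_mono (hS.integrable one_le_two) ((integrable_const (θ * m)).add hint) hsplit
    rw [Pi.add_def, integral_add (integrable_const _) hint, integral_const, probReal_univ,
      one_smul] at this
    have hCS := integral_mul_le_sqrt_mul_sqrt_of_nonneg (.of_forall hS0)
      (.of_forall hg0) hS hg
    rw [hg2] at hCS
    linarith
  rw [← Real.sqrt_mul (integral_nonneg fun x => sq_nonneg _)] at hmain
  exact (Real.le_sqrt (mul_nonneg (by linarith) hm) (by positivity)).1 hmain

end SecondMoment

section Gaussian

lemma integral_sq_gaussianReal (v : ℝ≥0) : ∫ x, x ^ 2 ∂gaussianReal 0 v = v := by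
  have h := variance_of_integral_eq_zero (μ := gaussianReal 0 v) aemeasurable_id
    integral_id_gaussianReal
  rw [variance_id_gaussianReal] at h
  simpa using h.symm

lemma integrable_abs_gaussianReal (v : ℝ≥0) : Integrable (fun x => |x|) (gaussianReal 0 v) :=
  ((memLp_id_gaussianReal 1).integrable le_rfl).abs

lemma integral_abs_gaussianReal (v : ℝ≥0) :
    ∫ x, |x| ∂gaussianReal 0 v = √v * ∫ x, |x| ∂gaussianReal 0 1 := by
  have hlaw : HasLaw (fun x => √v * x) (gaussianReal 0 v) (gaussianReal 0 1) := by
    convert gaussianReal_const_mul HasLaw.id (√v) using 2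
    · rfl
    · simp
    · ext
      simp [Real.sq_sqrt v.coe_nonneg]
  rw [← hlaw.integral_comp continuous_abs.aestronglyMeasurable]
  simp [abs_mul, integral_const_mul]

lemma integral_abs_gaussianReal_one_pos : 0 < ∫ x, |x| ∂gaussianReal 0 1 := by
  refine (integral_nonneg fun x => abs_nonneg x).lt_of_ne fun h => ?_
  have hae : (fun x => |x|) =ᵐ[gaussianReal 0 1] 0 := (integral_eq_zero_iff_of_nonneg
    (fun x => abs_nonneg x) (integrable_abs_gaussianReal 1)).1 h.symm
  have : ∫ x, x ^ 2 ∂gaussianReal 0 1 = 0 := integral_eq_zero_of_ae <| hae.mono fun x hx => by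
    simpa using hx
  simp [integral_sq_gaussianReal] at this

variable {Ω : Type*} [MeasurableSpace Ω] {P : Measure Ω} {X : Ω → ℝ} {w : ℝ≥0}

lemma ProbabilityTheory.HasLaw.memLp_two_of_gaussianReal (hX : HasLaw X (gaussianReal 0 w) P) :
    MemLp X 2 P := by
  have h := memLp_id_gaussianReal' (μ := 0) (v := w) 2 (by simp)
  rw [← hX.map_eq, memLp_map_measure_iff (by rw [hX.map_eq]; fun_prop) hX.aemeasurable] at h
  exact h

lemma ProbabilityTheory.HasLaw.integral_sq_of_gaussianReal (hX : HasLaw X (gaussianReal 0 w) P) :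
    ∫ ω, X ω ^ 2 ∂P = w := by
  rw [← integral_sq_gaussianReal, ← hX.integral_comp (by fun_prop)]
  rfl

lemma ProbabilityTheory.HasLaw.integral_abs_of_gaussianReal (hX : HasLaw X (gaussianReal 0 w) P) :
    ∫ ω, |X ω| ∂P = √w * ∫ x, |x| ∂gaussianReal 0 1 := by
  rw [← integral_abs_gaussianReal, ← hX.integral_comp (by fun_prop)]
  rfl

end Gaussian

section Tightness

variable {α : Type*} [MeasurableSpace α] {μ : Measure α}

lemma exists_forall_measure_lt_sum_range_lt_of_ae_summable [IsFiniteMeasure μ]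
    {Y : ℕ → α → ℝ} (hY : ∀ m, AEMeasurable (Y m) μ) (hY0 : ∀ m, 0 ≤ Y m)
    (hsum : ∀ᵐ x ∂μ, Summable fun m => Y m x) {ε : ℝ≥0∞} (hε : 0 < ε) :
    ∃ B : ℕ, ∀ N, μ {x | (B : ℝ) < ∑ m ∈ range N, Y m x} < ε := by
  set W : α → ℝ≥0∞ := fun x => ∑' m, ENNReal.ofReal (Y m x)
  have hW : AEMeasurable W μ := AEMeasurable.tsum fun m => (hY m).ennreal_ofReal
  have hW_top : μ {x | W x = ∞} = 0 := by
    have h : ∀ᵐ x ∂μ, W x ≠ ∞ := hsum.mono fun x hx => by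
      simp only [W, ← ENNReal.ofReal_tsum_of_nonneg (fun m => hY0 m x) hx]
      exact ENNReal.ofReal_ne_top
    simpa [ae_iff] using h
  have hlim : Tendsto (fun n : ℕ => μ {x | (n : ℝ≥0∞) < W x}) atTop (𝓝 0) := by
    have h := tendsto_measure_iInter_atTop (μ := μ) (s := fun n : ℕ => {x | (n : ℝ≥0∞) < W x})
      (fun n => nullMeasurableSet_lt aemeasurable_const hW)
      (fun n k hnk x (hx : (k : ℝ≥0∞) < W x) => (Nat.cast_le.2 hnk).trans_lt hx)
      ⟨0, measure_ne_top _ _⟩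
    have hinter : (⋂ n : ℕ, {x | (n : ℝ≥0∞) < W x}) ⊆ {x | W x = ∞} := fun x hx => by
      by_contra hx_top
      obtain ⟨n, hn⟩ := ENNReal.exists_nat_gt hx_top
      exact (Set.mem_iInter.1 hx n).not_gt hn
    rwa [measure_mono_null hinter hW_top] at h
  obtain ⟨B, hB⟩ := (hlim.eventually (gt_mem_nhds hε)).exists
  refine ⟨B, fun N => (measure_mono fun x (hx : (B : ℝ) < _) => ?_).trans_lt hB⟩
  calc (B : ℝ≥0∞) = ENNReal.ofReal B := (ENNReal.ofReal_natCast B).symm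
    _ < ENNReal.ofReal (∑ m ∈ range N, Y m x) :=
      (ENNReal.ofReal_lt_ofReal_iff ((Nat.cast_nonneg B).trans_lt hx)).2 hx
    _ = ∑ m ∈ range N, ENNReal.ofReal (Y m x) := ENNReal.ofReal_sum_of_nonneg fun m _ => hY0 m x
    _ ≤ W x := ENNReal.sum_le_tsum _

end Tightness

section AbelDini

variable {u : ℕ → ℝ}

lemma summable_div_one_add_sum_range_sq (hu : ∀ m, 0 ≤ u m) :
    Summable fun m => u m / (1 + ∑ k ∈ range (m + 1), u k) ^ 2 := by
  set P : ℕ → ℝ := fun N => 1 + ∑ k ∈ range N, u k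
  have hP : ∀ N, 0 < P N := fun N => add_pos_of_pos_of_nonneg one_pos (sum_nonneg fun k _ => hu k)
  have hPle : ∀ m, P m ≤ P (m + 1) := fun m => by simp [P, sum_range_succ, hu m]
  have hle : ∀ m, u m / P (m + 1) ^ 2 ≤ 1 / P m - 1 / P (m + 1) := fun m => by
    rw [div_sub_div _ _ (hP m).ne' (hP (m + 1)).ne', one_mul, mul_one,
      show P (m + 1) - P m = u m by simp [P, sum_range_succ], sq]
    exact div_le_div_of_nonneg_left (hu m) (mul_pos (hP m) (hP _))
      (mul_le_mul_of_nonneg_right (hPle m) (hP _).le)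
  refine Summable.of_nonneg_of_le (fun m => div_nonneg (hu m) (sq_nonneg _)) hle ?_
  refine summable_of_sum_range_le (c := 1) (fun m => sub_nonneg.2 ?_) fun N => ?_
  · exact one_div_le_one_div_of_le (hP m) (hPle m)
  · rw [sum_range_sub' (fun m => 1 / P m)]
    simp [P, (hP N).le]

lemma not_summable_div_one_add_sum_range (hu : ∀ m, 0 ≤ u m) (h : ¬Summable u) :
    ¬Summable fun m => u m / (1 + ∑ k ∈ range (m + 1), u k) := by
  set P : ℕ → ℝ := fun N => 1 + ∑ k ∈ range N, u k
  have hP : ∀ N, 0 < P N := fun N => add_pos_of_pos_of_nonneg one_pos (sum_nonneg fun k _ => hu k)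
  have hPmono : Monotone P := monotone_nat_of_le_succ fun m => by simp [P, sum_range_succ, hu m]
  have hPtop : Tendsto P atTop atTop :=
    tendsto_atTop_add_const_left _ 1 ((not_summable_iff_tendsto_nat_atTop_of_nonneg hu).1 h)
  -- as `P → ∞`, these blocks contradict the Cauchy property of the partial sums
  have hblock : ∀ M N, M ≤ N → 1 - P M / P N ≤ ∑ m ∈ Ico M N, u m / P (m + 1) := by
    intro M N hMN
    calc 1 - P M / P N = ∑ m ∈ Ico M N, u m / P N := by
          rw [← sum_div, sum_Ico_eq_sub _ hMN, one_sub_div (hP N).ne']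
          simp [P]
      _ ≤ ∑ m ∈ Ico M N, u m / P (m + 1) := sum_le_sum fun m hm =>
          div_le_div_of_nonneg_left (hu m) (hP _) (hPmono (mem_Ico.1 hm).2)
  intro hs
  obtain ⟨M, hM⟩ :=
    Metric.cauchySeq_iff'.1 hs.hasSum.tendsto_sum_nat.cauchySeq (1 / 2) one_half_pos
  obtain ⟨N, hMN, hN⟩ :=
    ((eventually_ge_atTop M).and (hPtop.eventually_ge_atTop (2 * P M))).exists
  have hdist := hM N hMN
  rw [Real.dist_eq, ← sum_Ico_eq_sub _ hMN,
    abs_of_nonneg (sum_nonneg fun m _ => div_nonneg (hu m) (hP _).le)] at hdist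
  have : P M / P N ≤ 1 / 2 := by rw [div_le_iff₀ (hP N)]; linarith
  linarith [hblock M N hMN]

lemma exists_summable_sq_not_summable_mul {t : ℕ → ℝ} (ht : ∀ m, 0 ≤ t m)
    (h : ¬Summable fun m => t m ^ 2) :
    ∃ b : ℕ → ℝ, (∀ m, 0 ≤ b m) ∧ (Summable fun m => b m ^ 2) ∧
      ¬Summable fun m => b m * t m := by
  set P : ℕ → ℝ := fun m => 1 + ∑ k ∈ range (m + 1), t k ^ 2
  have hP : ∀ m, 0 < P m := fun m =>
    add_pos_of_pos_of_nonneg one_pos (sum_nonneg fun k _ => sq_nonneg (t k))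
  refine ⟨fun m => t m / P m, fun m => div_nonneg (ht m) (hP m).le, ?_, ?_⟩
  · simpa only [div_pow] using summable_div_one_add_sum_range_sq fun m => sq_nonneg (t m)
  · refine fun hs => not_summable_div_one_add_sum_range (fun m => sq_nonneg (t m)) h
      (hs.congr fun m => ?_)
    ring

end AbelDini

section GaussianSeries

variable {Ω : Type*} [MeasurableSpace Ω] {P : Measure Ω} {Y : ℕ → Ω → ℝ} {w : ℕ → ℝ≥0}
  {c : ℕ → ℝ}

lemma memLp_two_mul_abs_of_hasLaw_gaussianReal (hY : ∀ m, HasLaw (Y m) (gaussianReal 0 (w m)) P)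
    (m : ℕ) : MemLp (fun ω => c m * |Y m ω|) 2 P :=
  (hY m).memLp_two_of_gaussianReal.abs.const_mul (c m)

lemma integral_sum_mul_abs_of_hasLaw_gaussianReal [IsProbabilityMeasure P]
    (hY : ∀ m, HasLaw (Y m) (gaussianReal 0 (w m)) P) (s : Finset ℕ) :
    ∫ ω, ∑ m ∈ s, c m * |Y m ω| ∂P = (∫ x, |x| ∂gaussianReal 0 1) * ∑ m ∈ s, c m * √(w m) := by
  rw [integral_finsetSum _ fun m _ =>
    (memLp_two_mul_abs_of_hasLaw_gaussianReal hY m).integrable one_le_two, mul_sum]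
  refine sum_congr rfl fun m _ => ?_
  rw [integral_const_mul, (hY m).integral_abs_of_gaussianReal]
  ring

lemma integral_sq_sum_mul_abs_le_of_hasLaw_gaussianReal
    (hY : ∀ m, HasLaw (Y m) (gaussianReal 0 (w m)) P) (hc : ∀ m, 0 ≤ c m) (s : Finset ℕ) :
    ∫ ω, (∑ m ∈ s, c m * |Y m ω|) ^ 2 ∂P ≤ (∑ m ∈ s, c m * √(w m)) ^ 2 := by
  convert integral_sq_sum_le_sq_sum_sqrt s (f := fun m ω => c m * |Y m ω|)
    (fun m ω => mul_nonneg (hc m) (abs_nonneg _)) (memLp_two_mul_abs_of_hasLaw_gaussianReal hY)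
    using 3 with m
  simp_rw [mul_pow, sq_abs, integral_const_mul, (hY m).integral_sq_of_gaussianReal,
    Real.sqrt_mul (sq_nonneg _), Real.sqrt_sq (hc m)]

theorem summable_mul_sqrt_of_ae_summable_mul_abs [IsProbabilityMeasure P]
    (hY : ∀ m, HasLaw (Y m) (gaussianReal 0 (w m)) P) (hc : ∀ m, 0 ≤ c m)
    (hsum : ∀ᵐ ω ∂P, Summable fun m => c m * |Y m ω|) :
    Summable fun m => c m * √(w m) := by
  set κ := ∫ x, |x| ∂gaussianReal 0 1
  have hκ : 0 < κ := integral_abs_gaussianReal_one_pos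
  set S : ℕ → Ω → ℝ := fun N ω => ∑ m ∈ range N, c m * |Y m ω|
  set A : ℕ → ℝ := fun N => ∑ m ∈ range N, c m * √(w m)
  have hPZ : ∀ N, 0 < A N → κ ^ 2 / 4 ≤ P.real {ω | κ * A N / 2 < S N ω} := by
    intro N hA
    have h := paley_zygmund (μ := P) (S := S N)
      (fun ω => sum_nonneg fun m _ => mul_nonneg (hc m) (abs_nonneg _))
      (memLp_finsetSum _ fun m _ => memLp_two_mul_abs_of_hasLaw_gaussianReal hY m)
      (θ := 1 / 2) (by norm_num) (by norm_num)
    have hmean : ∫ ω, S N ω ∂P = κ * A N := integral_sum_mul_abs_of_hasLaw_gaussianReal hY _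
    have hsq : ∫ ω, S N ω ^ 2 ∂P ≤ A N ^ 2 :=
      integral_sq_sum_mul_abs_le_of_hasLaw_gaussianReal hY hc _
    rw [hmean] at h
    have hp : 0 ≤ P.real {ω | 1 / 2 * (κ * A N) < S N ω} := measureReal_nonneg
    refine le_of_mul_le_mul_right ?_ (pow_pos hA 2)
    calc κ ^ 2 / 4 * A N ^ 2 = ((1 - 1 / 2) * (κ * A N)) ^ 2 := by ring
      _ ≤ _ := h.trans (mul_le_mul_of_nonneg_right hsq hp)
      _ = P.real {ω | κ * A N / 2 < S N ω} * A N ^ 2 := by rw [mul_comm, one_div_mul_eq_div]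
  by_contra hdiv
  have hAtop : Tendsto A atTop atTop :=
    (not_summable_iff_tendsto_nat_atTop_of_nonneg fun m =>
      mul_nonneg (hc m) (Real.sqrt_nonneg _)).1 hdiv
  obtain ⟨B, hB⟩ := exists_forall_measure_lt_sum_range_lt_of_ae_summable
    (fun m => ((hY m).aemeasurable.abs).const_mul (c m))
    (fun m ω => mul_nonneg (hc m) (abs_nonneg _)) hsum (ε := ENNReal.ofReal (κ ^ 2 / 4))
    (by positivity)
  obtain ⟨N, hAN, hBN⟩ :=
    ((hAtop.eventually_gt_atTop 0).and (hAtop.eventually_gt_atTop (2 * B / κ))).exists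
  have hsub : {ω | κ * A N / 2 < S N ω} ⊆ {ω | (B : ℝ) < S N ω} := fun ω hω => by
    have : (B : ℝ) < κ * A N / 2 := by rw [div_lt_iff₀ hκ] at hBN; linarith
    exact this.trans hω
  have hBN' : P.real {ω | (B : ℝ) < S N ω} < κ ^ 2 / 4 := ENNReal.toReal_lt_of_lt_ofReal (hB N)
  linarith [(hPZ N hAN).trans (measureReal_mono hsub)]

end GaussianSeries

theorem stmt14_general {Ω : Type*} [MeasureSpace Ω] [IsProbabilityMeasure (ℙ : Measure Ω)]
    (X : ℕ → Ω → ℝ) (v : ℕ → ℝ≥0)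
    (hvar : ∀ n, Measure.map (X n) ℙ = ProbabilityTheory.gaussianReal 0 (v n))
    (h : ∀ a : ℕ → ℂ, (Summable fun m : ℕ => ‖a (m + 1)‖ ^ 2) →
      ∀ᵐ ω ∂ℙ, ∀ r₀ : ℝ, 0 < r₀ → r₀ < 1 →
        Summable fun m : ℕ =>
          ‖a (m + 1)‖ * |X (m + 1) ω| * r₀ ^ alphaStar (m + 1))
    (r : ℝ) (hr0 : 0 < r) (hr1 : r < 1) :
    Summable fun m : ℕ => (v (m + 1) : ℝ) * r ^ (2 * alphaStar (m + 1)) := by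
  have hlaw : ∀ m, HasLaw (X (m + 1)) (gaussianReal 0 (v (m + 1))) ℙ := fun m =>
    ⟨.of_map_ne_zero (by simp [hvar, IsProbabilityMeasure.ne_zero]), hvar _⟩
  set t : ℕ → ℝ := fun m => √(v (m + 1)) * r ^ alphaStar (m + 1)
  have ht_sq : ∀ m, t m ^ 2 = v (m + 1) * r ^ (2 * alphaStar (m + 1)) := fun m => by
    rw [mul_pow, Real.sq_sqrt (v _).coe_nonneg, pow_mul']
  by_contra hdiv
  obtain ⟨b, hb0, hb_sq, hbt⟩ := exists_summable_sq_not_summable_mul (t := t)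
    (fun m => mul_nonneg (Real.sqrt_nonneg _) (pow_nonneg hr0.le _))
    (by simpa only [ht_sq] using hdiv)
  -- `a (m + 1) = b m`; the value `a 0` is irrelevant
  have hb_norm : ∀ m, ‖((b ((m + 1) - 1) : ℝ) : ℂ)‖ = b m := fun m => by
    simp [Complex.norm_real, abs_of_nonneg (hb0 m)]
  have hae := h (fun n => (b (n - 1) : ℂ)) (by simpa only [hb_norm] using hb_sq)
  refine hbt ((summable_mul_sqrt_of_ae_summable_mul_abs hlaw
    (c := fun m => b m * r ^ alphaStar (m + 1))
    (fun m => mul_nonneg (hb0 m) (pow_nonneg hr0.le _))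
    (hae.mono fun ω hω => (hω r hr0 hr1).congr fun m => ?_)).congr fun m => ?_)
  · rw [hb_norm]; ring
  · ring

theorem stmt14 {Ω : Type*} [MeasureSpace Ω] [IsProbabilityMeasure (ℙ : Measure Ω)]
    (X : ℕ → Ω → ℝ) (hX : IsCenteredGaussianProcess X)
    (v : ℕ → ℝ≥0)
    (hvar : ∀ n, Measure.map (X n) ℙ = ProbabilityTheory.gaussianReal 0 (v n))
    (h : ∀ a : ℕ → ℂ, (Summable fun m : ℕ => ‖a (m + 1)‖ ^ 2) →
      ∀ᵐ ω ∂ℙ, ∀ r₀ : ℝ, 0 < r₀ → r₀ < 1 →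
        Summable fun m : ℕ =>
          ‖a (m + 1)‖ * |X (m + 1) ω| * r₀ ^ alphaStar (m + 1))
    (r : ℝ) (hr0 : 0 < r) (hr1 : r < 1) :
    Summable fun m : ℕ => (v (m + 1) : ℝ) * r ^ (2 * alphaStar (m + 1)) :=
  stmt14_general X v hvar h r hr0 hr1
end
end

section
/- Let 1 ≤ p < ∞ and let a : ℕ → ℂ satisfy ∑_{n=1}^∞ |a_n| r^{|α(n)|_*} < ∞ for every 0 < r < 1. Then for every integer n ≥ 1, |a_n| ≤ sup_{0<r<1} ( ∫_{𝕋^∞} |∑_{k=1}^∞ a_k r^{|α(k)|_*} w^{α(k)}|^p dm_∞(w) )^{1/p}. -/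
open MeasureTheory Filter
open scoped ENNReal NNReal Topology ProbabilityTheory

noncomputable section

instance : MeasurableSpace Circle := borel Circle
instance : BorelSpace Circle := ⟨rfl⟩

/-- The infinite torus `𝕋^∞`, coordinate `j` corresponding to the `(j+1)`-st prime. -/
abbrev TorusInf : Type := ℕ → Circle

/-- The Haar probability measure `m_∞` on `𝕋^∞` (the product of the normalized
arc-length measures on the circles). -/
def mInf : Measure TorusInf := Measure.haarMeasure ⊤

instance : IsProbabilityMeasure mInf :=
  ⟨by simpa [mInf] using Measure.haarMeasure_self (K₀ := (⊤ : TopologicalSpace.PositiveCompacts TorusInf))⟩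

/-- The monomial `w^{α(n)} = w₁^{α₁} ⋯ w_k^{α_k}` for `n = p₁^{α₁} ⋯ p_k^{α_k}`. -/
def monom (w : TorusInf) (n : ℕ) : ℂ :=
  n.factorization.prod fun p k => (w (p.primeCounting - 1) : ℂ) ^ k

/-- The value at `w ∈ 𝕋^∞` of `∑_{n≥1} b_n r^{|α(n)|_*} w^{α(n)}`. -/
def dilSeries (b : ℕ → ℂ) (r : ℝ) (w : TorusInf) : ℂ :=
  ∑' m : ℕ, b (m + 1) * (r : ℂ) ^ alphaStar (m + 1) * monom w (m + 1)

/-- `sup_{0<r<1} ∫_{𝕋^∞} |∑_{n≥1} b_n r^{|α(n)|_*} w^{α(n)}|^p dm_∞(w)`, valued in `[0,∞]`. -/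
def hardyNormP (p : ℝ) (b : ℕ → ℂ) : ℝ≥0∞ :=
  ⨆ r ∈ Set.Ioo (0 : ℝ) 1, ∫⁻ w, ENNReal.ofReal (‖dilSeries b r w‖ ^ p) ∂mInf

/-- `b` (indexed by `n ≥ 1`) is the coefficient sequence of a function in `H_∞^p`. -/
def IsHpCoeff (p : ℝ) (b : ℕ → ℂ) : Prop :=
  (∀ r : ℝ, 0 < r → r < 1 →
    Summable fun m : ℕ => ‖b (m + 1)‖ * r ^ alphaStar (m + 1)) ∧
  hardyNormP p b < ⊤

instance : mInf.IsMulLeftInvariant := by unfold mInf; infer_instance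

/-!
Distinct monomials `w^{α(m)}`, `w^{α(n)}` differ in the exponent of some prime, and rotating
that coordinate of `𝕋^∞` by a suitable angle flips the sign of `w^{α(m)} conj(w^{α(n)})`, so the
monomials are orthonormal for the Haar measure. The dilated series converges absolutely and
uniformly, so integrating it against `conj(w^{α(n)})` isolates `a_n r^{|α(n)|_*}`; hence
`|a_n| r^{|α(n)|_*} ≤ ‖F_r‖₁ ≤ ‖F_r‖_p`, and letting `r → 1` gives the claim.
-/
open ComplexConjugate

instance inst_s15 : mInf.IsMulLeftInvariant := by unfold mInf; infer_instance

lemma norm_monom (w : TorusInf) (n : ℕ) : ‖monom w n‖ = 1 := by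
  simp [monom, Finsupp.prod, Circle.norm_coe]

lemma continuous_monom (n : ℕ) : Continuous fun w : TorusInf => monom w n := by
  unfold monom Finsupp.prod
  fun_prop

lemma monom_mul (g w : TorusInf) (n : ℕ) : monom (g * w) n = monom g n * monom w n := by
  simp only [monom, Pi.mul_apply, Circle.coe_mul, mul_pow, Finsupp.prod_mul]

lemma conj_monom (w : TorusInf) (n : ℕ) : conj (monom w n) = monom w⁻¹ n := by
  simp only [monom, Finsupp.prod, map_prod, map_pow, ← Circle.coe_inv_eq_conj, Pi.inv_apply]

lemma monom_mul_conj_self (w : TorusInf) (n : ℕ) : monom w n * conj (monom w n) = 1 := by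
  rw [Complex.mul_conj, Complex.normSq_eq_norm_sq, norm_monom]
  norm_num

lemma Nat.primeCounting_sub_one_eq_count {p : ℕ} (hp : p.Prime) :
    p.primeCounting - 1 = Nat.count Nat.Prime p := by
  simp [Nat.primeCounting, Nat.primeCounting', Nat.count_succ, hp]

lemma Nat.nth_prime_primeCounting_sub_one {p : ℕ} (hp : p.Prime) :
    Nat.nth Nat.Prime (p.primeCounting - 1) = p := by
  rw [Nat.primeCounting_sub_one_eq_count hp, Nat.nth_count hp]

lemma monom_update_one {p : ℕ} (hp : p.Prime) (z : Circle) (n : ℕ) :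
    monom (Function.update 1 (p.primeCounting - 1) z) n = (z : ℂ) ^ n.factorization p := by
  unfold monom Finsupp.prod
  rw [Finset.prod_eq_single p]
  · simp
  · intro q hq hqp
    have hq : q.Prime := Nat.prime_of_mem_primeFactors (by simpa using hq)
    have hidx : q.primeCounting - 1 ≠ p.primeCounting - 1 := fun h => hqp <| by
      rw [← Nat.nth_prime_primeCounting_sub_one hq, h, Nat.nth_prime_primeCounting_sub_one hp]
    simp [Function.update_of_ne hidx]
  · intro hp
    simp [Finsupp.notMem_support_iff.mp hp]

lemma Circle.coe_exp_pi : (Circle.exp Real.pi : ℂ) = -1 := by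
  simp [Circle.coe_exp, Complex.exp_pi_mul_I]

lemma integral_monom_mul_conj_monom_of_ne {m n : ℕ} (hm : m ≠ 0) (hn : n ≠ 0) (hmn : m ≠ n) :
    ∫ w, monom w m * conj (monom w n) ∂mInf = 0 := by
  obtain ⟨p, hp_ne⟩ : ∃ p, m.factorization p ≠ n.factorization p := by
    by_contra! h
    exact hmn (Nat.factorization_inj hm hn (Finsupp.ext h))
  have hp : p.Prime := by
    by_contra hp
    simp [Nat.factorization_eq_zero_of_not_prime _ hp] at hp_ne
  set d : ℤ := m.factorization p - n.factorization p with hd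
  have hd0 : (d : ℝ) ≠ 0 := by
    rw [hd, Int.cast_ne_zero, sub_ne_zero]
    exact_mod_cast hp_ne
  -- translating by `g` multiplies the integrand by `z ^ d = -1`
  set z := Circle.exp (Real.pi / d)
  set g : TorusInf := Function.update 1 (p.primeCounting - 1) z
  have hz : z ^ m.factorization p * z⁻¹ ^ n.factorization p = Circle.exp Real.pi := by
    rw [inv_pow, ← zpow_natCast, ← zpow_natCast, ← zpow_neg, ← zpow_add, ← sub_eq_add_neg, ← hd,
      ← Circle.exp_intCast_mul, mul_div_cancel₀ _ hd0]
  refine integral_eq_zero_of_mul_left_eq_neg (g := g) fun w => ?_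
  have hg : monom g m * monom g⁻¹ n = -1 := by
    rw [← Circle.coe_exp_pi, ← hz]
    simp [g, ← Function.update_inv, monom_update_one hp]
  rw [conj_monom, conj_monom, mul_inv, monom_mul, monom_mul]
  linear_combination (monom w m * monom w⁻¹ n) * hg

lemma integral_monom_mul_conj_monom {m n : ℕ} (hm : m ≠ 0) (hn : n ≠ 0) :
    ∫ w, monom w m * conj (monom w n) ∂mInf = if m = n then 1 else 0 := by
  split_ifs with hmn
  · simp [hmn, monom_mul_conj_self]
  · exact integral_monom_mul_conj_monom_of_ne hm hn hmn

lemma continuous_tsum_mul_monom {c : ℕ → ℂ} (hc : Summable fun m => ‖c m‖) :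
    Continuous fun w => ∑' m, c m * monom w (m + 1) :=
  continuous_tsum (fun m => continuous_const.mul (continuous_monom _)) hc
    fun m w => by simp [norm_monom]

lemma integral_tsum_mul_monom_mul_conj_monom {c : ℕ → ℂ} (hc : Summable fun m => ‖c m‖)
    {n : ℕ} (hn : n ≠ 0) :
    ∫ w, (∑' m, c m * monom w (m + 1)) * conj (monom w n) ∂mInf = c (n - 1) := by
  set F : ℕ → TorusInf → ℂ := fun m w => c m * (monom w (m + 1) * conj (monom w n))
  have hF_norm : ∀ m w, ‖F m w‖ = ‖c m‖ := fun m w => by simp [F, norm_monom]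
  have hF_int : ∀ m, Integrable (F m) mInf := fun m =>
    (integrable_const ‖c m‖).mono'
      (continuous_const.mul ((continuous_monom _).mul
        (continuous_monom n).star)).aestronglyMeasurable
      (ae_of_all _ fun w => (hF_norm m w).le)
  have hF_sum : Summable fun m => ∫ w, ‖F m w‖ ∂mInf := by simpa [hF_norm] using hc
  simp_rw [← tsum_mul_right, mul_assoc]
  rw [← integral_tsum_of_summable_integral_norm hF_int hF_sum, tsum_eq_single (n - 1)]
  · rw [integral_const_mul, integral_monom_mul_conj_monom (n - 1).succ_ne_zero hn,
      if_pos (by omega), mul_one]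
  · intro m hm
    rw [integral_const_mul, integral_monom_mul_conj_monom m.succ_ne_zero hn, if_neg (by omega),
      mul_zero]

lemma enorm_integral_le_eLpNorm {α E : Type*} [MeasurableSpace α] {μ : Measure α}
    [IsProbabilityMeasure μ] [NormedAddCommGroup E] [NormedSpace ℝ E] {f : α → E}
    (hf : AEStronglyMeasurable f μ) {p : ℝ≥0∞} (hp : 1 ≤ p) :
    ‖∫ x, f x ∂μ‖ₑ ≤ eLpNorm f p μ :=
  calc ‖∫ x, f x ∂μ‖ₑ ≤ ∫⁻ x, ‖f x‖ₑ ∂μ := enorm_integral_le_lintegral_enorm f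
    _ = eLpNorm f 1 μ := eLpNorm_one_eq_lintegral_enorm.symm
    _ ≤ eLpNorm f p μ := eLpNorm_le_eLpNorm_of_exponent_le hp hf

lemma eLpNorm_ofReal_eq_lintegral_rpow_norm {α E : Type*} [MeasurableSpace α] {μ : Measure α}
    [NormedAddCommGroup E] (f : α → E) {p : ℝ} (hp : 0 < p) :
    eLpNorm f (ENNReal.ofReal p) μ = (∫⁻ x, ENNReal.ofReal (‖f x‖ ^ p) ∂μ) ^ (1 / p) := by
  rw [eLpNorm_eq_lintegral_rpow_enorm_toReal (by simpa using hp) ENNReal.ofReal_ne_top,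
    ENNReal.toReal_ofReal hp.le]
  simp_rw [← ofReal_norm, ENNReal.ofReal_rpow_of_nonneg (norm_nonneg _) hp.le]

lemma ofReal_norm_mul_pow_le_eLpNorm_dilSeries {b : ℕ → ℂ} {r : ℝ} (hr : 0 ≤ r)
    (hb : Summable fun m => ‖b (m + 1)‖ * r ^ alphaStar (m + 1)) {n : ℕ} (hn : n ≠ 0)
    {p : ℝ≥0∞} (hp : 1 ≤ p) :
    ENNReal.ofReal (‖b n‖ * r ^ alphaStar n) ≤ eLpNorm (dilSeries b r) p mInf := by
  set c : ℕ → ℂ := fun m => b (m + 1) * (r : ℂ) ^ alphaStar (m + 1)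
  have hc : Summable fun m => ‖c m‖ := hb.congr fun m => by simp [c, abs_of_nonneg hr]
  have hcoeff : ∫ w, dilSeries b r w * conj (monom w n) ∂mInf = b n * (r : ℂ) ^ alphaStar n := by
    simp only [dilSeries]
    rw [integral_tsum_mul_monom_mul_conj_monom hc hn]
    simp [c, Nat.sub_one_add_one hn]
  calc ENNReal.ofReal (‖b n‖ * r ^ alphaStar n)
      = ‖∫ w, dilSeries b r w * conj (monom w n) ∂mInf‖ₑ := by
        rw [hcoeff, ← ofReal_norm]
        simp [abs_of_nonneg hr]
    _ ≤ eLpNorm (fun w => dilSeries b r w * conj (monom w n)) p mInf :=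
        enorm_integral_le_eLpNorm (((continuous_tsum_mul_monom hc).mul
          (continuous_monom n).star).aestronglyMeasurable) hp
    _ = eLpNorm (dilSeries b r) p mInf :=
        eLpNorm_congr_norm_ae (ae_of_all _ fun w => by simp [norm_monom])

lemma ENNReal.ofReal_le_of_forall_mul_pow_le {c : ℝ} {S : ℝ≥0∞} (k : ℕ)
    (h : ∀ r ∈ Set.Ioo (0 : ℝ) 1, ENNReal.ofReal (c * r ^ k) ≤ S) : ENNReal.ofReal c ≤ S := by
  have hcont : Continuous fun r : ℝ => ENNReal.ofReal (c * r ^ k) :=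
    ENNReal.continuous_ofReal.comp (by fun_prop)
  have hlim : Tendsto (fun r : ℝ => ENNReal.ofReal (c * r ^ k)) (𝓝[<] 1)
      (𝓝 (ENNReal.ofReal c)) := by
    simpa using (hcont.tendsto 1).mono_left nhdsWithin_le_nhds
  exact le_of_tendsto hlim (eventually_of_mem (Ioo_mem_nhdsLT one_pos) h)

theorem stmt15 (p : ℝ) (hp : 1 ≤ p) (a : ℕ → ℂ)
    (ha : ∀ r : ℝ, 0 < r → r < 1 →
      Summable fun m : ℕ => ‖a (m + 1)‖ * r ^ alphaStar (m + 1))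
    (n : ℕ) (hn : 1 ≤ n) :
    ENNReal.ofReal (‖a n‖) ≤
      ⨆ r ∈ Set.Ioo (0 : ℝ) 1,
        (∫⁻ w, ENNReal.ofReal (‖dilSeries a r w‖ ^ p) ∂mInf) ^ (1 / p) := by
  refine ENNReal.ofReal_le_of_forall_mul_pow_le (alphaStar n) fun r hr => ?_
  refine le_trans ?_ (le_iSup₂ (f := fun r _ =>
    (∫⁻ w, ENNReal.ofReal (‖dilSeries a r w‖ ^ p) ∂mInf) ^ (1 / p)) r hr)
  rw [← eLpNorm_ofReal_eq_lintegral_rpow_norm _ (by linarith)]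
  exact ofReal_norm_mul_pow_le_eLpNorm_dilSeries hr.1.le (ha r hr.1 hr.2) (by omega)
    (by simpa using ENNReal.ofReal_le_ofReal hp)
end
end
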